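/- arXiv:1709.00552 — 4 statements merged into one kernel-verified Lean document; each statement's English description precedes it below -/
import Mathlib

section
/- Fix d ≥ 2 and r ∈ {1,...,d−1}, k ∈ {0,...,d−1} with k+r taken mod d, and real constants u, w, x, y. Define the d²×d² matrix ρ = u Σ_t|tt⟩⟨tt| + w Σ_{t≠t'}|tt'⟩⟨tt'| + x Σ_{t≠τ}|tt⟩⟨ττ| + y Σ_{t≠t'}|tt'⟩⟨t't|. For a ∈ {0,1}^d and s ∈ {0,1}, let Q_a = (d/2^d)|μ_a⟩⟨μ_a| with |μ_a⟩ = (1/√d)Σ_t(−1)^{a_t}|t⟩, and M^{(r)}_{ks} = (1/2)|Ψ^{(r)}_{ks}⟩⟨Ψ^{(r)}_{ks}| with |Ψ^{(r)}_{ks}⟩ = (|k⟩ + (−1)^s|k+r⟩)/√2. Then tr[(Q_a ⊗ M^{(r)}_{ks}) ρ] = (u + (d−1)w)/(2·2^d) + ((x+y)/(2·2^d))·(−1)^s·(−1)^{a_k ⊕ a_{k+r}}. -/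
/-!
With `|Φ⟩ = Σ_t |tt⟩` and `SWAP |tt'⟩ = |t't⟩`, the state decomposes as
`ρ = (u - w - x - y) Σ_t |tt⟩⟨tt| + w 1 + x |Φ⟩⟨Φ| + y SWAP`, and against a product operator `A ⊗ B`
these four pieces have traces `Σ_t A_tt B_tt`, `tr A tr B`, `tr (A Bᵀ)` and `tr (A B)`.
Up to scalars, `Q_a = ε εᵀ` with `ε_t = (-1)^{a_t}` and `M = ψ ψᵀ` with
`ψ = e_k + (-1)^s e_{k+r}`, so everything reduces to `ε ⬝ ε = d`, `ψ ⬝ ψ = 2` (this needs `k ≠ k + r`) and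
`(ε ⬝ ψ)² = (ε_k + (-1)^s ε_{k+r})² = 2 + 2 (-1)^s ε_k ε_{k+r}`.
-/

open Matrix Kronecker

/-- `|μ_a⟩ = (1/√d) Σ_t (−1)^{a_t} |t⟩`. -/
noncomputable def muVec (d : ℕ) (a : Fin d → Bool) : Fin d → ℂ :=
  fun t => (((1 / Real.sqrt d) * (if a t then -1 else 1) : ℝ) : ℂ)

/-- `Q_a = (d/2^d) |μ_a⟩⟨μ_a|`. -/
noncomputable def Qmat (d : ℕ) (a : Fin d → Bool) : Matrix (Fin d) (Fin d) ℂ :=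
  ((d : ℂ) / 2 ^ d) • Matrix.of fun i j => muVec d a i * (starRingEnd ℂ) (muVec d a j)

/-- `|Ψ^{(r)}_{ks}⟩ = (|k⟩ + (−1)^s |k+r⟩)/√2`. -/
noncomputable def psiVec (d : ℕ) (k l : Fin d) (s : Bool) : Fin d → ℂ :=
  fun t => ((if t = k then 1 else 0) +
    (if s then -1 else 1) * (if t = l then 1 else 0)) / (Real.sqrt 2 : ℂ)

/-- `M^{(r)}_{ks} = (1/2)|Ψ^{(r)}_{ks}⟩⟨Ψ^{(r)}_{ks}|`. -/
noncomputable def Mmat (d : ℕ) (k l : Fin d) (s : Bool) : Matrix (Fin d) (Fin d) ℂ :=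
  (1 / 2 : ℂ) • Matrix.of fun i j => psiVec d k l s i * (starRingEnd ℂ) (psiVec d k l s j)

/-- `ρ = u Σ_t|tt⟩⟨tt| + w Σ_{t≠t'}|tt'⟩⟨tt'| + x Σ_{t≠τ}|tt⟩⟨ττ| + y Σ_{t≠t'}|tt'⟩⟨t't|`. -/
def rhoSym (d : ℕ) (u w x y : ℝ) : Matrix (Fin d × Fin d) (Fin d × Fin d) ℂ :=
  Matrix.of fun p q =>
    (if p.1 = p.2 ∧ q = p then (u : ℂ) else 0) +
    (if p.1 ≠ p.2 ∧ q = p then (w : ℂ) else 0) +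
    (if p.1 = p.2 ∧ q.1 = q.2 ∧ p.1 ≠ q.1 then (x : ℂ) else 0) +
    (if p.1 ≠ p.2 ∧ q = (p.2, p.1) then (y : ℂ) else 0)

def diagIndicator (n R : Type*) [DecidableEq n] [Zero R] [One R] : n × n → R :=
  fun p => if p.1 = p.2 then 1 else 0

def swapMatrix (n R : Type*) [DecidableEq n] [Zero R] [One R] :
    Matrix (n × n) (n × n) R :=
  of fun p q => if q = p.swap then 1 else 0

section KroneckerTrace

variable {n R : Type*} [Fintype n] [DecidableEq n] [CommSemiring R] (A B : Matrix n n R)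

lemma trace_kronecker_mul_diagonal_diagIndicator :
    trace ((A ⊗ₖ B) * diagonal (diagIndicator n R)) = diag A ⬝ᵥ diag B := by
  simp [trace, diagIndicator, Fintype.sum_prod_type, dotProduct]

lemma trace_kronecker_mul_vecMulVec_diagIndicator :
    trace ((A ⊗ₖ B) * vecMulVec (diagIndicator n R) (diagIndicator n R)) = trace (A * Bᵀ) := by
  simp [trace, mul_apply, vecMulVec_apply, diagIndicator, Fintype.sum_prod_type]

lemma trace_kronecker_mul_swapMatrix :
    trace ((A ⊗ₖ B) * swapMatrix n R) = trace (A * B) := by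
  simp [trace, mul_apply, swapMatrix, Fintype.sum_prod_type, Prod.ext_iff, ite_and]

end KroneckerTrace

section SingleDotProduct

variable {n R : Type*} [Fintype n] [DecidableEq n] [CommSemiring R]

lemma dotProduct_single_add_smul_single (v : n → R) (k l : n) (c : R) :
    v ⬝ᵥ (Pi.single k 1 + c • Pi.single l 1) = v k + c * v l := by
  rw [dotProduct_add, dotProduct_smul, dotProduct_single, dotProduct_single, smul_eq_mul, mul_one,
    mul_one]

lemma single_add_smul_single_dotProduct_self {k l : n} (hkl : k ≠ l) (c : R) :
    (Pi.single k 1 + c • Pi.single l 1) ⬝ᵥ (Pi.single k 1 + c • Pi.single l 1) = 1 + c * c := by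
  rw [dotProduct_single_add_smul_single]
  simp [hkl, hkl.symm]

end SingleDotProduct

lemma rhoSym_eq_sum (d : ℕ) (u w x y : ℝ) :
    rhoSym d u w x y =
      ((u : ℂ) - w - x - y) • diagonal (diagIndicator (Fin d) ℂ) + (w : ℂ) • 1 +
        (x : ℂ) • vecMulVec (diagIndicator (Fin d) ℂ) (diagIndicator (Fin d) ℂ) +
        (y : ℂ) • swapMatrix (Fin d) ℂ := by
  ext ⟨i, j⟩ ⟨i', j'⟩
  simp only [rhoSym, diagIndicator, swapMatrix, of_apply, Matrix.add_apply, Matrix.smul_apply,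
    diagonal_apply, one_apply, vecMulVec_apply, Prod.mk.injEq, Prod.swap_prod_mk, smul_eq_mul]
  split_ifs <;> grind

lemma trace_kronecker_mul_rhoSym (d : ℕ) (u w x y : ℝ) (A B : Matrix (Fin d) (Fin d) ℂ) :
    trace ((A ⊗ₖ B) * rhoSym d u w x y) =
      (u - w - x - y) * (diag A ⬝ᵥ diag B) + w * (trace A * trace B) + x * trace (A * Bᵀ) +
        y * trace (A * B) := by
  simp only [rhoSym_eq_sum, Matrix.mul_add, Matrix.mul_smul, Matrix.mul_one, trace_add, trace_smul,
    trace_kronecker, trace_kronecker_mul_diagonal_diagIndicator,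
    trace_kronecker_mul_vecMulVec_diagIndicator, trace_kronecker_mul_swapMatrix, smul_eq_mul]

lemma trace_kronecker_vecMulVec_mul_rhoSym (d : ℕ) (u w x y : ℝ) (α β : Fin d → ℂ) :
    trace ((vecMulVec α α ⊗ₖ vecMulVec β β) * rhoSym d u w x y) =
      (u - w - x - y) * ((α * α) ⬝ᵥ (β * β)) + w * ((α ⬝ᵥ α) * (β ⬝ᵥ β)) +
        (x + y) * (α ⬝ᵥ β) ^ 2 := by
  simp only [trace_kronecker_mul_rhoSym, diag_vecMulVec, trace_vecMulVec, transpose_vecMulVec,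
    vecMulVec_mul_vecMulVec, vecMulVec_smul, trace_smul, smul_eq_mul]
  ring

def boolSign (b : Bool) : ℂ := if b then -1 else 1

lemma boolSign_mul_self (b : Bool) : boolSign b * boolSign b = 1 := by
  cases b <;> simp [boolSign]

lemma boolSign_comp_mul_self {ι : Type*} (a : ι → Bool) : (boolSign ∘ a) * (boolSign ∘ a) = 1 :=
  funext fun t => boolSign_mul_self (a t)

lemma boolSign_mul_boolSign (b b' : Bool) :
    boolSign b * boolSign b' = if b ≠ b' then -1 else 1 := by
  cases b <;> cases b' <;> simp [boolSign]

lemma boolSign_add_mul_boolSign_sq (b c e : Bool) :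
    (boolSign b + boolSign c * boolSign e) ^ 2 =
      2 + 2 * boolSign c * (boolSign b * boolSign e) := by
  linear_combination boolSign_mul_self b + boolSign e ^ 2 * boolSign_mul_self c +
    boolSign_mul_self e

lemma Qmat_eq_smul_vecMulVec (d : ℕ) [NeZero d] (a : Fin d → Bool) :
    Qmat d a = (1 / 2 ^ d : ℂ) • vecMulVec (boolSign ∘ a) (boolSign ∘ a) := by
  have hd : (d : ℂ) ≠ 0 := Nat.cast_ne_zero.mpr (NeZero.ne d)
  have hsqrt : ((Real.sqrt d : ℝ) : ℂ) ^ 2 = d := by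
    rw [← Complex.ofReal_pow, Real.sq_sqrt (Nat.cast_nonneg d), Complex.ofReal_natCast]
  ext i j
  simp only [Qmat, muVec, boolSign, Matrix.smul_apply, of_apply, vecMulVec_apply,
    Function.comp_apply, Complex.conj_ofReal, smul_eq_mul]
  push_cast [apply_ite Complex.ofReal]
  field_simp
  rw [hsqrt]
  field_simp

lemma Mmat_eq_smul_vecMulVec (d : ℕ) (k l : Fin d) (s : Bool) :
    Mmat d k l s = (1 / 4 : ℂ) • vecMulVec (Pi.single k 1 + boolSign s • Pi.single l 1)
      (Pi.single k 1 + boolSign s • Pi.single l 1) := by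
  have hsqrt : ((Real.sqrt 2 : ℝ) : ℂ) ^ 2 = 2 := by
    rw [← Complex.ofReal_pow, Real.sq_sqrt zero_le_two, Complex.ofReal_ofNat]
  ext i j
  simp only [Mmat, psiVec, boolSign, Matrix.smul_apply, of_apply, vecMulVec_apply, Pi.add_apply,
    Pi.smul_apply, Pi.single_apply, smul_eq_mul, map_div₀, map_add, map_mul,
    apply_ite (starRingEnd ℂ), map_one, map_zero, map_neg, Complex.conj_ofReal]
  field_simp
  rw [hsqrt]
  ring

lemma trace_Qmat_kronecker_Mmat_mul_rhoSym (d : ℕ) [NeZero d] (u w x y : ℝ) (a : Fin d → Bool)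
    {k l : Fin d} (hkl : k ≠ l) (s : Bool) :
    trace ((Qmat d a ⊗ₖ Mmat d k l s) * rhoSym d u w x y) =
      1 / (4 * 2 ^ d) * ((u - w - x - y) * 2 + w * (d * 2) +
        (x + y) * (boolSign (a k) + boolSign s * boolSign (a l)) ^ 2) := by
  set ψ : Fin d → ℂ := Pi.single k 1 + boolSign s • Pi.single l 1
  have hψψ : ψ ⬝ᵥ ψ = 2 := by
    rw [single_add_smul_single_dotProduct_self hkl, boolSign_mul_self, one_add_one_eq_two]
  have hεε : (boolSign ∘ a) ⬝ᵥ (boolSign ∘ a) = d := by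
    simp [dotProduct, boolSign_mul_self]
  have hεεψψ : (boolSign ∘ a * boolSign ∘ a) ⬝ᵥ (ψ * ψ) = 2 := by
    rw [boolSign_comp_mul_self, one_dotProduct, ← hψψ]
    rfl
  rw [Qmat_eq_smul_vecMulVec, Mmat_eq_smul_vecMulVec, smul_kronecker, kronecker_smul, smul_smul,
    Matrix.smul_mul, trace_smul, trace_kronecker_vecMulVec_mul_rhoSym, hεεψψ, hεε, hψψ,
    dotProduct_single_add_smul_single]
  simp only [Function.comp_apply, smul_eq_mul]
  ring

theorem trace_formula_general (d : ℕ) [NeZero d] (u w x y : ℝ)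
    (k r : Fin d) (hr : r ≠ 0) (a : Fin d → Bool) (s : Bool) :
    Matrix.trace ((Qmat d a ⊗ₖ Mmat d k (k + r) s) * rhoSym d u w x y) =
      (((u + ((d:ℝ) - 1) * w) / (2 * 2 ^ d)
        + ((x + y) / (2 * 2 ^ d)) * (if s then -1 else 1) *
          (if a k ≠ a (k + r) then -1 else 1) : ℝ) : ℂ) := by
  have hkl : k ≠ k + r := by simpa using hr
  rw [trace_Qmat_kronecker_Mmat_mul_rhoSym d u w x y a hkl, boolSign_add_mul_boolSign_sq,
    boolSign_mul_boolSign, boolSign]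
  push_cast [apply_ite Complex.ofReal]
  ring

/-- `tr[(Q_a ⊗ M^{(r)}_{ks}) ρ]
  = (u+(d−1)w)/(2·2^d) + ((x+y)/(2·2^d))·(−1)^s·(−1)^{a_k ⊕ a_{k+r}}`. -/
theorem trace_formula (d : ℕ) [NeZero d] (hd : 2 ≤ d) (u w x y : ℝ)
    (k r : Fin d) (hr : r ≠ 0) (a : Fin d → Bool) (s : Bool) :
    Matrix.trace ((Qmat d a ⊗ₖ Mmat d k (k + r) s) * rhoSym d u w x y) =
      (((u + ((d:ℝ) - 1) * w) / (2 * 2 ^ d)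
        + ((x + y) / (2 * 2 ^ d)) * (if s then -1 else 1) *
          (if a k ≠ a (k + r) then -1 else 1) : ℝ) : ℂ) :=
  trace_formula_general d u w x y k r hr a s
end

section
/- Let x_d ∈ (0,1) solve (1 − x/(d−2))^{1/2} + ((d−1)/(d−2))(1 − x/(d−2))^{−1/2} + (√x − 1/√x)/√(d−2) − 2 = 0, and set β_* = (x_d/2)/(1 + x_d). Then as d → ∞, β_* = 1/4 − 1/(8√(d−2)) − O((d−2)^{−3/2}). -/
/-!
Write `t = d - 2` and `a = (1 - x) / √x`. Since `((1 + x) / √x) ^ 2 = a ^ 2 + 4`, one has exactly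
`β_* = 1/4 - a / (4 √(a² + 4))`, and `a / (4 √(a² + 4)) = a/8 + O(a³)`. Multiplying the defining
equation by `t √(1 - x/t)` turns it into `a √(1 - x/t) √t = 1 + t (1 - √(1 - x/t))²`, and
`0 ≤ 1 - √(1 - x/t) ≤ x/t` then pins `a` down to `1/√t + O(t^{-3/2})`.
-/

open Real Set

lemma rpow_neg_three_halves {t : ℝ} (ht : 0 ≤ t) : t ^ (-(3 : ℝ) / 2) = 1 / √t ^ 3 := by
  rw [sqrt_eq_rpow, ← rpow_natCast, ← rpow_mul ht, one_div, ← rpow_neg ht]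
  norm_num

lemma div_two_div_one_add_eq {x : ℝ} (hx : 0 < x) :
    x / 2 / (1 + x) = 1 / 4 - (1 - x) / √x / (4 * √(((1 - x) / √x) ^ 2 + 4)) := by
  have hy : 0 < √x := sqrt_pos.2 hx
  have hroot : √(((1 - x) / √x) ^ 2 + 4) = (1 + x) / √x := by
    rw [sqrt_eq_iff_eq_sq (by positivity) (by positivity), div_pow, div_pow, sq_sqrt hx.le]
    field_simp
    ring
  rw [hroot]
  field_simp
  ring

lemma abs_div_four_sqrt_sq_add_four_sub_le {a : ℝ} (ha : 0 ≤ a) :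
    |a / (4 * √(a ^ 2 + 4)) - a / 8| ≤ a ^ 3 / 64 := by
  set r := √(a ^ 2 + 4)
  have hr2 : r ^ 2 = a ^ 2 + 4 := sq_sqrt (by positivity)
  have hr : 2 ≤ r := by nlinarith [sqrt_nonneg (a ^ 2 + 4)]
  have hdiff : a / 8 - a / (4 * r) = a ^ 3 / (8 * r * (r + 2)) := by
    field_simp
    linear_combination (4 * a) * hr2
  rw [abs_sub_comm, hdiff, abs_of_nonneg (by positivity)]
  calc a ^ 3 / (8 * r * (r + 2)) ≤ a ^ 3 / (8 * 2 * (2 + 2)) := by gcongr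
    _ = a ^ 3 / 64 := by norm_num

lemma abs_quarter_sub_div_four_sqrt_sub_quarter_add_le {a s : ℝ} (hs : 0 < s) (hs2 : 2 ≤ s ^ 2)
    (ha : a ∈ Icc (1 / s) (1 / s + 4 / s ^ 3)) :
    |1 / 4 - a / (4 * √(a ^ 2 + 4)) - 1 / 4 + 1 / (8 * s)| ≤ 1 / s ^ 3 := by
  obtain ⟨hlow, hup⟩ := ha
  have ha0 : 0 ≤ a := le_trans (by positivity) hlow
  have ha3 : a ≤ 3 / s :=
    calc a ≤ 1 / s + 4 / s ^ 3 := hup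
      _ = (1 + 4 / s ^ 2) / s := by field_simp
      _ ≤ 3 / s := by
        gcongr
        linarith [(div_le_iff₀ (by positivity : (0 : ℝ) < s ^ 2)).2 (by linarith : (4 : ℝ) ≤ 2 * s ^ 2)]
  calc |1 / 4 - a / (4 * √(a ^ 2 + 4)) - 1 / 4 + 1 / (8 * s)|
      = |(a / (4 * √(a ^ 2 + 4)) - a / 8) + (a - 1 / s) / 8| := by
        rw [← abs_neg]
        ring_nf
    _ ≤ a ^ 3 / 64 + (4 / s ^ 3) / 8 := by
        refine (abs_add_le _ _).trans (add_le_add (abs_div_four_sqrt_sq_add_four_sub_le ha0) ?_)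
        rw [abs_of_nonneg (by linarith)]
        gcongr
        linarith
    _ ≤ (3 / s) ^ 3 / 64 + 4 / s ^ 3 / 8 := by gcongr
    _ = 59 / 64 * (1 / s ^ 3) := by ring
    _ ≤ 1 / s ^ 3 := by
        rw [mul_comm]
        exact mul_le_of_le_one_right (by positivity) (by norm_num)

lemma one_sub_div_sqrt_mul_eq {t x : ℝ} (ht : 0 < t) (hx : 0 < x) (hxt : x < t)
    (h : √(1 - x / t) + (t + 1) / t * (√(1 - x / t))⁻¹ + (√x - (√x)⁻¹) / √t - 2 = 0) :
    (1 - x) / √x * (√(1 - x / t) * √t) = 1 + t * (1 - √(1 - x / t)) ^ 2 := by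
  have hw : 0 < √(1 - x / t) := sqrt_pos.2 (by rw [sub_pos, div_lt_one ht]; exact hxt)
  have hw2 : √(1 - x / t) ^ 2 = 1 - x / t := sq_sqrt (by rw [sub_nonneg, div_le_one ht]; exact hxt.le)
  generalize √(1 - x / t) = w at *
  have hs : 0 < √t := sqrt_pos.2 ht
  have hy : 0 < √x := sqrt_pos.2 hx
  have hs2 : √t ^ 2 = t := sq_sqrt ht.le
  have hy2 : √x ^ 2 = x := sq_sqrt hx.le
  field_simp at h
  rw [div_mul_eq_mul_div, div_eq_iff hy.ne']
  apply mul_right_cancel₀ hs.ne'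
  linear_combination (-1) * h + w * (1 - x) * hs2 + w * t * hy2

lemma one_sub_div_sqrt_mem_Icc {t x : ℝ} (ht : 2 ≤ t) (hx : x ∈ Ioo 0 1)
    (h : √(1 - x / t) + (t + 1) / t * (√(1 - x / t))⁻¹ + (√x - (√x)⁻¹) / √t - 2 = 0) :
    (1 - x) / √x ∈ Icc (1 / √t) (1 / √t + 4 / √t ^ 3) := by
  obtain ⟨hx0, hx1⟩ := hx
  have ht0 : 0 < t := by linarith
  have hkey := one_sub_div_sqrt_mul_eq ht0 hx0 (by linarith) h
  have hxt : x / t ≤ 1 := (div_le_one ht0).2 (by linarith)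
  have hw1 : √(1 - x / t) ≤ 1 := sqrt_le_one.2 (by linarith [div_pos hx0 ht0])
  have hwl : 1 - x / t ≤ √(1 - x / t) := le_sqrt_self_iff.2 (by linarith [div_pos hx0 ht0])
  have hs : 0 < √t := sqrt_pos.2 ht0
  have hs2 : √t ^ 2 = t := sq_sqrt ht0.le
  have ha : 0 ≤ (1 - x) / √x := div_nonneg (by linarith) (sqrt_nonneg x)
  have htx : t * (x / t) = x := mul_div_cancel₀ x ht0.ne'
  generalize (1 - x) / √x = a at *
  generalize √(1 - x / t) = w at *
  generalize √t = s at *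
  subst hs2
  -- `t (1 - w) ≤ x < 1` makes the right side of `hkey` at most `1 + 1/t`, while `w ≥ 1 - 1/t`.
  have hp : s ^ 2 * (1 - w) ≤ 1 := by nlinarith
  have hqw : s ^ 2 * (a * s * w) ≤ s ^ 2 + 1 := by
    nlinarith [mul_le_mul_of_nonneg_left hp (by linarith : 0 ≤ 1 - w)]
  have hq : 0 ≤ a * s := mul_nonneg ha hs.le
  have hq3 : a * s ≤ 3 := by nlinarith
  constructor
  · rw [div_le_iff₀ hs]
    nlinarith
  · rw [show 1 / s + 4 / s ^ 3 = (s ^ 2 + 4) / (s ^ 2 * s) by field_simp,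
      le_div_iff₀ (by positivity)]
    nlinarith

/-- if `x_d ∈ (0,1)` solves
`(1 − x/(d−2))^{1/2} + ((d−1)/(d−2))(1 − x/(d−2))^{−1/2} + (√x − 1/√x)/√(d−2) − 2 = 0`
and `β_* = (x_d/2)/(1 + x_d)`, then `β_* = 1/4 − 1/(8√(d−2)) − O((d−2)^{−3/2})` as `d → ∞`:
there are constants `C, d_0` with
`|β_* − 1/4 + 1/(8√(d−2))| ≤ C(d−2)^{−3/2}` for all `d ≥ d_0`. -/
theorem beta_star_asymptotics :
    ∃ C : ℝ, ∃ d0 : ℕ, ∀ d : ℕ, d0 ≤ d → ∀ x : ℝ, x ∈ Set.Ioo (0 : ℝ) 1 →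
      Real.sqrt (1 - x / ((d : ℝ) - 2)) +
          (((d : ℝ) - 1) / ((d : ℝ) - 2)) * (Real.sqrt (1 - x / ((d : ℝ) - 2)))⁻¹ +
          (Real.sqrt x - (Real.sqrt x)⁻¹) / Real.sqrt ((d : ℝ) - 2) - 2 = 0 →
      |(x / 2) / (1 + x) - 1 / 4 + 1 / (8 * Real.sqrt ((d : ℝ) - 2))| ≤
        C * ((d : ℝ) - 2) ^ (-(3 : ℝ) / 2) := by
  refine ⟨1, 4, fun d hd x hx h => ?_⟩
  have ht : 2 ≤ (d : ℝ) - 2 := by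
    have : (4 : ℝ) ≤ d := by exact_mod_cast hd
    linarith
  rw [show (d : ℝ) - 1 = (d - 2) + 1 by ring] at h
  have ha := one_sub_div_sqrt_mem_Icc ht hx h
  rw [one_mul, rpow_neg_three_halves (by linarith), div_two_div_one_add_eq hx.1]
  exact abs_quarter_sub_div_four_sqrt_sub_quarter_add_le (sqrt_pos.2 (by linarith))
    (by rw [sq_sqrt (by linarith)]; exact ht) ha
end

section
/- Let Ext: {0,1}^n × U → {0,1}^ℓ be a universal hash family, i.e., for all x ≠ y in {0,1}^n, Pr_{u←U}[Ext(x,u) = Ext(y,u)] ≤ 2^{−ℓ}. For each x let σ_x be a positive semidefinite operator with tr σ_x = 1 on a fixed Hilbert space, and define ω(z,u) = 2^{ℓ−n} Σ_{x: Ext(x,u)=z} σ_x and ω_av = 2^{−n} Σ_x σ_x. Then E_{z,u}[(ω(z,u) − ω_av)²] ≤ ((2^ℓ − 1)/2^n)·(2^{−n} Σ_x σ_x²) ... specializing to product form: if σ_x = ⊗_{i=1}^n τ_{x_i} with τ_0, τ_1 fixed density operators, then E_{z,u}[(ω(z,u) − ω_av)²] = ((2^ℓ−1)/2^n)·⊗_{i=1}^n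 (τ_0² + τ_1²)/2. -/
open ComplexOrder

/-!
Since `∑ z, ω z u = 2 ^ ℓ • ω_av` for every seed `u`, the sum over `z` of `(ω z u - ω_av)²`
is `∑ z, ω z u ^ 2 - 2 ^ ℓ • ω_av ^ 2`. Expanding `ω z u ^ 2` gives the products `σ x * σ y`
over the pairs with `Ext x u = Ext y u`; a pair `x ≠ y` collides for exactly a `2 ^ (-ℓ)`
fraction of the seeds, so after averaging over `u` the off-diagonal pairs cancel the `ω_av ^ 2`
term and only the diagonal `∑ x, σ x * σ x` is left. For product states this diagonal sum
factorises over the tensor factors into `⊗ (τ₀² + τ₁²)`.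
-/

open Finset

namespace Matrix

variable {ι m n p R : Type*} [Fintype ι] [CommSemiring R]

def piKronecker (A : ι → Matrix m n R) : Matrix (ι → m) (ι → n) R :=
  of fun i j => ∏ t, A t (i t) (j t)

theorem piKronecker_mul [DecidableEq ι] [Fintype n] (A : ι → Matrix m n R)
    (B : ι → Matrix n p R) :
    piKronecker A * piKronecker B = piKronecker fun t => A t * B t := by
  ext i j
  simp only [piKronecker, mul_apply, of_apply, ← prod_mul_distrib]
  exact (Fintype.prod_sum fun t k => A t (i t) k * B t k (j t)).symm

theorem sum_piKronecker [DecidableEq ι] {β : Type*} [Fintype β] (A : ι → β → Matrix m n R) :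
    ∑ x : ι → β, piKronecker (fun t => A t (x t)) = piKronecker fun t => ∑ b, A t b := by
  ext i j
  simp only [piKronecker, sum_apply, of_apply]
  exact (Fintype.prod_sum fun t b => A t b (i t) (j t)).symm

theorem piKronecker_smul (c : R) (A : ι → Matrix m n R) :
    piKronecker (fun t => c • A t) = c ^ Fintype.card ι • piKronecker A := by
  ext i j
  simp [piKronecker, prod_mul_distrib]

end Matrix

theorem Finset.sum_sub_mul_sub_of_sum_eq {ι A : Type*} [Ring A] (s : Finset ι) (a : ι → A)
    (b : A) (h : ∑ i ∈ s, a i = #s • b) :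
    ∑ i ∈ s, (a i - b) * (a i - b) = ∑ i ∈ s, a i * a i - #s • (b * b) := by
  simp only [sub_mul, mul_sub, sum_sub_distrib, ← sum_mul, ← mul_sum, h, sum_const,
    smul_mul_assoc, mul_smul_comm]
  abel

theorem Finset.sum_fiberwise_mul_self {X Z A : Type*} [Fintype X] [Fintype Z] [DecidableEq Z]
    [Semiring A] (g : X → Z) (f : X → A) :
    ∑ z, (∑ x with g x = z, f x) * (∑ y with g y = z, f y) =
      ∑ x, ∑ y with g y = g x, f x * f y := by
  rw [← Finset.sum_fiberwise univ g fun x => ∑ y with g y = g x, f x * f y]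
  refine sum_congr rfl fun z _ => ?_
  rw [sum_mul_sum]
  refine sum_congr rfl fun x hx => ?_
  rw [(mem_filter.mp hx).2]

def IsExactUniversalHash {X U Z : Type*} [Fintype U] [Fintype Z] [DecidableEq Z]
    (h : X → U → Z) : Prop :=
  ∀ x y, x ≠ y → #{u | h x u = h y u} * Fintype.card Z = Fintype.card U

section UniversalHash

variable {X Z U 𝕜 A : Type*} [Fintype X] [DecidableEq X] [Fintype Z] [DecidableEq Z]
  [Fintype U] [Ring A] {h : X → U → Z}

theorem IsExactUniversalHash.card_smul_sum_collisions [CommRing 𝕜] [Module 𝕜 A]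
    (hh : IsExactUniversalHash h) (f : X → A) :
    (Fintype.card Z : 𝕜) • ∑ u, ∑ x, ∑ y with h y u = h x u, f x * f y =
      (Fintype.card U : 𝕜) •
        ((∑ x, f x) * (∑ x, f x) + (Fintype.card Z - 1 : 𝕜) • ∑ x, f x * f x) := by
  set K : 𝕜 := (Fintype.card Z : 𝕜)
  set M : 𝕜 := (Fintype.card U : 𝕜)
  have hcount (x y : X) :
      K * #{u | h y u = h x u} = M + if y = x then (K - 1) * M else 0 := by
    by_cases hyx : y = x
    · simp only [hyx, filter_true, card_univ, ↓reduceIte, K, M]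
      ring
    · rw [if_neg hyx, add_zero, mul_comm]
      simp only [K, M]
      rw [← Nat.cast_mul, hh y x hyx]
  calc K • ∑ u, ∑ x, ∑ y with h y u = h x u, f x * f y
      = ∑ x, ∑ y, (K * #{u | h y u = h x u}) • (f x * f y) := by
        simp only [sum_filter, smul_sum]
        rw [sum_comm]
        refine sum_congr rfl fun x _ => ?_
        rw [sum_comm]
        refine sum_congr rfl fun y _ => ?_
        rw [← smul_sum, ← sum_filter, sum_const, ← Nat.cast_smul_eq_nsmul 𝕜, smul_smul]
    _ = _ := by
        simp only [hcount, add_smul, sum_add_distrib, ite_smul, zero_smul, sum_ite_eq',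
          mem_univ, if_true, ← smul_sum, sum_mul_sum, smul_add, smul_smul, mul_comm]

theorem IsExactUniversalHash.second_moment_eq [Nonempty Z] [Nonempty U] [Field 𝕜] [CharZero 𝕜]
    [Algebra 𝕜 A] (hh : IsExactUniversalHash h) (σ : X → A) :
    let N : 𝕜 := Fintype.card X
    let K : 𝕜 := Fintype.card Z
    let ω : Z → U → A := fun z u => (K / N) • ∑ x with h x u = z, σ x
    let ωav : A := N⁻¹ • ∑ x, σ x
    (K * Fintype.card U)⁻¹ • ∑ z, ∑ u, (ω z u - ωav) * (ω z u - ωav) =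
      ((K - 1) / N) • (N⁻¹ • ∑ x, σ x * σ x) := by
  intro N K ω ωav
  have hK : K ≠ 0 := Nat.cast_ne_zero.mpr Fintype.card_ne_zero
  have hM : (Fintype.card U : 𝕜) ≠ 0 := Nat.cast_ne_zero.mpr Fintype.card_ne_zero
  have hsum_z (u : U) : ∑ z, ω z u = #(univ : Finset Z) • ωav := by
    rw [card_univ, ← Nat.cast_smul_eq_nsmul 𝕜, ← smul_sum, Finset.sum_fiberwise, smul_smul,
      div_eq_mul_inv]
  have hper (u : U) : ∑ z, (ω z u - ωav) * (ω z u - ωav) =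
      (K / N) ^ 2 • ∑ x, ∑ y with h y u = h x u, σ x * σ y - K • (ωav * ωav) := by
    rw [sum_sub_mul_sub_of_sum_eq _ _ _ (hsum_z u), card_univ, ← Nat.cast_smul_eq_nsmul 𝕜]
    simp only [ω, smul_mul_smul_comm, ← smul_sum, sum_fiberwise_mul_self, sq]
    rfl
  rw [sum_comm]
  simp only [hper, sum_sub_distrib, ← smul_sum, sum_const, card_univ, ← Nat.cast_smul_eq_nsmul 𝕜]
  rw [show (K / N) ^ 2 = K / N ^ 2 * K by ring, ← smul_smul, hh.card_smul_sum_collisions σ]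
  simp only [ωav, smul_mul_smul_comm]
  match_scalars <;> field_simp <;> ring

end UniversalHash

theorem universal_hash_second_moment_general {U : Type*} [Fintype U] [Nonempty U]
    (n l m : ℕ)
    (Ext : (Fin n → Bool) → U → (Fin l → Bool))
    (hExt : ∀ x y : Fin n → Bool, x ≠ y →
      ((Finset.univ.filter fun u : U => Ext x u = Ext y u).card : ℝ) / (Fintype.card U) =
        (2 : ℝ) ^ (-(l : ℤ)))
    (τ : Bool → Matrix (Fin m) (Fin m) ℂ) :
    let σ : (Fin n → Bool) → Matrix (Fin n → Fin m) (Fin n → Fin m) ℂ :=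
      fun x => Matrix.of fun i j => ∏ t, τ (x t) (i t) (j t)
    let ω : (Fin l → Bool) → U → Matrix (Fin n → Fin m) (Fin n → Fin m) ℂ :=
      fun z u => ((2 : ℂ) ^ l / 2 ^ n) •
        ∑ x ∈ Finset.univ.filter (fun x => Ext x u = z), σ x
    let ωav : Matrix (Fin n → Fin m) (Fin n → Fin m) ℂ := ((2 : ℂ) ^ n)⁻¹ • ∑ x, σ x
    ((2 : ℂ) ^ l * Fintype.card U)⁻¹ •
        ∑ z : Fin l → Bool, ∑ u : U, (ω z u - ωav) * (ω z u - ωav) =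
      (((2 : ℂ) ^ l - 1) / 2 ^ n) •
        Matrix.of (fun i j =>
          ∏ t, ((2 : ℂ)⁻¹ • (τ false * τ false + τ true * τ true)) (i t) (j t)) := by
  intro σ ω ωav
  have hcard (k : ℕ) : Fintype.card (Fin k → Bool) = 2 ^ k := by simp
  have hh : IsExactUniversalHash Ext := by
    intro x y hxy
    have h := hExt x y hxy
    rw [zpow_neg, zpow_natCast, div_eq_iff (by positivity)] at h
    rw [hcard]
    exact_mod_cast (by rw [h]; field_simp :
      (#{u | Ext x u = Ext y u} : ℝ) * 2 ^ l = Fintype.card U)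
  have hσ : σ = fun x => Matrix.piKronecker fun t => τ (x t) := rfl
  have hsquares : ((2 : ℂ) ^ n)⁻¹ • ∑ x, σ x * σ x =
      Matrix.piKronecker fun _ => (2 : ℂ)⁻¹ • (τ false * τ false + τ true * τ true) := by
    calc ((2 : ℂ) ^ n)⁻¹ • ∑ x, σ x * σ x
        = (2 : ℂ)⁻¹ ^ Fintype.card (Fin n) •
            ∑ x : Fin n → Bool, Matrix.piKronecker fun t => τ (x t) * τ (x t) := by
          simp only [hσ, Matrix.piKronecker_mul, inv_pow, Fintype.card_fin]
      _ = (2 : ℂ)⁻¹ ^ Fintype.card (Fin n) • Matrix.piKronecker fun _ => ∑ b, τ b * τ b := by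
          rw [Matrix.sum_piKronecker fun _ b => τ b * τ b]
      _ = _ := by rw [← Matrix.piKronecker_smul, Fintype.sum_bool, add_comm]
  have key := hh.second_moment_eq (𝕜 := ℂ) σ
  simp only [hcard, Nat.cast_pow, Nat.cast_ofNat] at key
  rw [hsquares] at key
  exact key

/-- for a universal hash family `Ext` (collision probability exactly `2^{−ℓ}`
for distinct inputs) and product states `σ_x = τ_{x_1} ⊗ ⋯ ⊗ τ_{x_n}`, with
`ω(z,u) = 2^{ℓ−n} Σ_{x : Ext(x,u)=z} σ_x` and `ω_av = 2^{−n} Σ_x σ_x`, one has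
`E_{z,u}[(ω(z,u) − ω_av)²] = ((2^ℓ−1)/2^n)·⊗_{i=1}^n (τ_0² + τ_1²)/2`. -/
theorem universal_hash_second_moment {U : Type*} [Fintype U] [Nonempty U] [DecidableEq U]
    (n l m : ℕ)
    (Ext : (Fin n → Bool) → U → (Fin l → Bool))
    (hExt : ∀ x y : Fin n → Bool, x ≠ y →
      ((Finset.univ.filter fun u : U => Ext x u = Ext y u).card : ℝ) / (Fintype.card U) =
        (2 : ℝ) ^ (-(l : ℤ)))
    (τ : Bool → Matrix (Fin m) (Fin m) ℂ)
    (hτpsd : ∀ b, (τ b).PosSemidef) (hτtr : ∀ b, (τ b).trace = 1) :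
    let σ : (Fin n → Bool) → Matrix (Fin n → Fin m) (Fin n → Fin m) ℂ :=
      fun x => Matrix.of fun i j => ∏ t, τ (x t) (i t) (j t)
    let ω : (Fin l → Bool) → U → Matrix (Fin n → Fin m) (Fin n → Fin m) ℂ :=
      fun z u => ((2 : ℂ) ^ l / 2 ^ n) •
        ∑ x ∈ Finset.univ.filter (fun x => Ext x u = z), σ x
    let ωav : Matrix (Fin n → Fin m) (Fin n → Fin m) ℂ := ((2 : ℂ) ^ n)⁻¹ • ∑ x, σ x
    ((2 : ℂ) ^ l * Fintype.card U)⁻¹ •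
        ∑ z : Fin l → Bool, ∑ u : U, (ω z u - ωav) * (ω z u - ωav) =
      (((2 : ℂ) ^ l - 1) / 2 ^ n) •
        Matrix.of (fun i j =>
          ∏ t, ((2 : ℂ)⁻¹ • (τ false * τ false + τ true * τ true)) (i t) (j t)) :=
  universal_hash_second_moment_general n l m Ext hExt τ
end

section
/- Let A be a Hermitian operator on a finite-dimensional Hilbert space and let {A_i} be Hermitian-operator-valued random variables with A = E[A_i] in the sense of a finite average. Then E‖A_i‖_1 = E tr√(A_i²) ≤ tr√(E[A_i²]), i.e., the expected trace norm of Hermitian random matrices is at most the trace of the square root of the expected square. -/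
/-!
For an invertible Hermitian `W` with inverse `W'` and a Hermitian `B`, expanding
`0 ≤ tr ((W - W' B)ᴴ (W - W' B))` gives the trace AM–GM inequality
`2 tr B ≤ tr W² + tr (W'² B²)`. Apply it to `B = |Aᵢ|`, so that `B² = Aᵢ²`, and average:
`2 E tr|Aᵢ| ≤ tr W² + tr (W⁻² S)` with `S = E Aᵢ²`. The choice `W² = √S + ε` (invertible for
`ε > 0`) makes the right side `∑ⱼ (√λⱼ + ε + λⱼ / (√λⱼ + ε)) ≤ 2 tr √S + n ε` over the
eigenvalues `λⱼ` of `S`; let `ε → 0`.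
-/

open ComplexOrder

lemma Real.div_sqrt_add_le_sqrt (x : ℝ) {ε : ℝ} (hε : 0 ≤ ε) : x / (√x + ε) ≤ √x := by
  have hx : x ≤ √x * √x := by
    rcases le_total 0 x with h | h
    · rw [Real.mul_self_sqrt h]
    · nlinarith [Real.sqrt_nonneg x]
  refine div_le_of_le_mul₀ (by positivity) (Real.sqrt_nonneg x) ?_
  nlinarith [Real.sqrt_nonneg x]

namespace Matrix

variable {𝕜 n : Type*} [RCLike 𝕜] [Fintype n] [DecidableEq n]

lemma IsHermitian.trace_cfc {A : Matrix n n 𝕜} (hA : A.IsHermitian) (f : ℝ → ℝ) :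
    (cfc f A).trace = ∑ i, (f (hA.eigenvalues i) : 𝕜) := by
  rw [hA.cfc_eq, IsHermitian.cfc, Unitary.conjStarAlgAut_apply, trace_mul_cycle,
    Unitary.coe_star_mul_self, one_mul, trace_diagonal]
  rfl

lemma IsHermitian.re_trace_cfc {A : Matrix n n 𝕜} (hA : A.IsHermitian) (f : ℝ → ℝ) :
    RCLike.re (cfc f A).trace = ∑ i, f (hA.eigenvalues i) := by
  simp [hA.trace_cfc]

protected lemma cfc_mul (f g : ℝ → ℝ) (A : Matrix n n 𝕜) :
    cfc (fun x => f x * g x) A = cfc f A * cfc g A :=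
  cfc_mul f g A (A.finite_real_spectrum.continuousOn f) (A.finite_real_spectrum.continuousOn g)

lemma IsHermitian.cfc_abs_mul_self {A : Matrix n n 𝕜} (hA : A.IsHermitian) :
    cfc (fun x : ℝ => |x|) A * cfc (fun x : ℝ => |x|) A = A * A := by
  rw [← Matrix.cfc_mul]
  simp only [abs_mul_abs_self]
  rw [Matrix.cfc_mul, cfc_id' ℝ A hA.isSelfAdjoint]

lemma two_mul_re_trace_le_of_mul_eq_one {B W W' : Matrix n n 𝕜} (hB : B.IsHermitian)
    (hW : W.IsHermitian) (hW' : W'.IsHermitian) (h : W * W' = 1) :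
    2 * RCLike.re B.trace ≤ RCLike.re (W * W).trace + RCLike.re (W' * W' * (B * B)).trace := by
  have h' : W' * W = 1 := mul_eq_one_comm.mp h
  have hexpand : (W - W' * B)ᴴ * (W - W' * B) = W * W - B - B + B * (W' * W' * B) := by
    rw [conjTranspose_sub, conjTranspose_mul, hW.eq, hW'.eq, hB.eq]
    calc _ = W * W - W * W' * B - B * (W' * W) + B * (W' * W' * B) := by noncomm_ring
      _ = _ := by rw [h, h', one_mul, mul_one]
  have hnonneg := (posSemidef_conjTranspose_mul_self (W - W' * B)).trace_nonneg
  rw [hexpand, trace_add, trace_sub, trace_sub, trace_mul_comm B, mul_assoc _ B B] at hnonneg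
  have hre := (RCLike.nonneg_iff.mp hnonneg).1
  simp only [map_add, map_sub] at hre
  linarith

lemma two_mul_sum_mul_sum_abs_eigenvalues_le {m : ℕ} {A : Fin m → Matrix n n 𝕜}
    (hA : ∀ i, (A i).IsHermitian) {p : Fin m → ℝ} (hp : ∀ i, 0 ≤ p i) (hps : ∑ i, p i = 1)
    {W W' : Matrix n n 𝕜} (hW : W.IsHermitian) (hW' : W'.IsHermitian) (h : W * W' = 1) :
    2 * ∑ i, p i * ∑ j, |(hA i).eigenvalues j| ≤
      RCLike.re (W * W).trace + RCLike.re (W' * W' * ∑ i, (p i : 𝕜) • (A i * A i)).trace := by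
  have hterm (i : Fin m) : 2 * ∑ j, |(hA i).eigenvalues j| ≤
      RCLike.re (W * W).trace + RCLike.re (W' * W' * (A i * A i)).trace := by
    have habs : (cfc (fun x : ℝ => |x|) (A i)).IsHermitian := cfc_predicate _ _
    have := two_mul_re_trace_le_of_mul_eq_one habs hW hW' h
    rwa [(hA i).re_trace_cfc, (hA i).cfc_abs_mul_self] at this
  have hlinear : RCLike.re (W' * W' * ∑ i, (p i : 𝕜) • (A i * A i)).trace =
      ∑ i, p i * RCLike.re (W' * W' * (A i * A i)).trace := by
    simp [Matrix.mul_sum, trace_sum, trace_smul, RCLike.smul_re]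
  calc 2 * ∑ i, p i * ∑ j, |(hA i).eigenvalues j|
      = ∑ i, p i * (2 * ∑ j, |(hA i).eigenvalues j|) := by
        rw [Finset.mul_sum]; exact Finset.sum_congr rfl fun _ _ => by ring
    _ ≤ ∑ i, p i * (RCLike.re (W * W).trace + RCLike.re (W' * W' * (A i * A i)).trace) :=
        Finset.sum_le_sum fun i _ => mul_le_mul_of_nonneg_left (hterm i) (hp i)
    _ = _ := by rw [hlinear]; simp [mul_add, Finset.sum_add_distrib, ← Finset.sum_mul, hps]

lemma IsHermitian.exists_mul_eq_one_re_trace_le {S : Matrix n n 𝕜} (hS : S.IsHermitian)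
    {ε : ℝ} (hε : 0 < ε) :
    ∃ W W' : Matrix n n 𝕜, W.IsHermitian ∧ W'.IsHermitian ∧ W * W' = 1 ∧
      RCLike.re (W * W).trace + RCLike.re (W' * W' * S).trace ≤
        2 * RCLike.re (cfc Real.sqrt S).trace + Fintype.card n * ε := by
  set φ : ℝ → ℝ := fun x => √(√x + ε)
  have hφ (x : ℝ) : 0 < φ x := Real.sqrt_pos.2 (by positivity)
  refine ⟨cfc φ S, cfc (fun x => (φ x)⁻¹) S, cfc_predicate _ _, cfc_predicate _ _, ?_, ?_⟩
  · rw [← Matrix.cfc_mul]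
    simp_rw [mul_inv_cancel₀ (hφ _).ne']
    exact cfc_const_one ℝ S
  have hWW : cfc φ S * cfc φ S = cfc (fun x => √x + ε) S := by
    rw [← Matrix.cfc_mul]
    congr 1 with x
    exact Real.mul_self_sqrt (by positivity)
  have hW'W'S : cfc (fun x => (φ x)⁻¹) S * cfc (fun x => (φ x)⁻¹) S * S =
      cfc (fun x => x / (√x + ε)) S := by
    calc _ = cfc (fun x => (φ x)⁻¹ * (φ x)⁻¹) S * cfc (fun x => x) S := by
          rw [Matrix.cfc_mul, cfc_id' ℝ S hS.isSelfAdjoint]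
      _ = _ := by
          rw [← Matrix.cfc_mul]
          congr 1 with x
          rw [← mul_inv, Real.mul_self_sqrt (by positivity), inv_mul_eq_div]
  have hcard : (Fintype.card n : ℝ) * ε = ∑ _ : n, ε := by simp
  rw [hWW, hW'W'S, hS.re_trace_cfc, hS.re_trace_cfc, hS.re_trace_cfc, Finset.mul_sum, hcard,
    ← Finset.sum_add_distrib, ← Finset.sum_add_distrib]
  refine Finset.sum_le_sum fun i _ => ?_
  linarith [Real.div_sqrt_add_le_sqrt (hS.eigenvalues i) hε.le]

end Matrix

/-- for finitely many Hermitian matrices `A_i` with probability weights `p_i`,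
the expected trace norm satisfies `E‖A_i‖_1 = E tr√(A_i²) ≤ tr√(E[A_i²])`.
Here `‖A_i‖_1 = Σ_j |eigenvalue_j(A_i)|` and `√` of the positive semidefinite matrix
`E[A_i²] = Σ_i p_i A_i²` is its positive semidefinite square root. -/
theorem expected_trace_norm_le {n : Type*} [Fintype n] [DecidableEq n] (m : ℕ)
    (A : Fin m → Matrix n n ℂ) (hA : ∀ i, (A i).IsHermitian)
    (p : Fin m → ℝ) (hp : ∀ i, 0 ≤ p i) (hps : ∑ i, p i = 1)
    (hS : (∑ i, (p i : ℂ) • (A i * A i)).PosSemidef) :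
    ∑ i, p i * (∑ j, |(hA i).eigenvalues j|) ≤ ((hS.1.eigenvectorUnitary : Matrix n n ℂ) *
      Matrix.diagonal (((↑) : ℝ → ℂ) ∘ (√·) ∘ hS.1.eigenvalues) *
      (star hS.1.eigenvectorUnitary : Matrix n n ℂ)).trace.re := by
  change _ ≤ RCLike.re (hS.1.cfc Real.sqrt).trace
  rw [← hS.1.cfc_eq]
  refine le_of_forall_pos_le_add fun δ hδ => ?_
  obtain ⟨W, W', hW, hW', hWW', hbound⟩ :=
    hS.1.exists_mul_eq_one_re_trace_le (ε := δ / (Fintype.card n + 1)) (by positivity)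
  have hslack : Fintype.card n * (δ / (Fintype.card n + 1)) ≤ δ := by
    rw [← mul_div_assoc, div_le_iff₀ (by positivity)]
    nlinarith
  have := (Matrix.two_mul_sum_mul_sum_abs_eigenvalues_le hA hp hps hW hW' hWW').trans hbound
  linarith
end
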